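/- arXiv:1305.0636 — 2 statements merged into one kernel-verified Lean document; each statement's English description precedes it below -/
import Mathlib

section
/- Let G be a finite graph on vertices {1, …, n} and let H₁, …, H_n be finite graphs. Then the inflation G[H₁, …, H_n] satisfies lcw(G[H₁, …, H_n]) ≤ lcw(G) + max_{1 ≤ i ≤ n} lcw(H_i). Consequently, for classes C and D of graphs of bounded linear clique-width, lcw(C[D]) ≤ lcw(C) + lcw(D). -/
/-! ## Common definitions

Linear clique-width (lcw) expressions and derived notions, following
Brignall–Lozin–Stacho, "Bichain graphs: geometric model and universal graphs" /
"Linear clique-width of subclasses of cographs".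

An lcw expression over a label alphabet `L` is a list of operations:
insert a new vertex with a given label, add all edges between two distinct
label classes, or relabel one label class to another.  Vertices are indexed
by the natural numbers `0, 1, 2, …` in order of insertion. -/

/-- The three kinds of operations of an lcw expression. -/
inductive LcwOp (L : Type) where
  | insert : L → LcwOp L
  | join : L → L → LcwOp L
  | relabel : L → L → LcwOp L

/-- The state while executing an lcw expression: the number `n` of vertices
inserted so far (the vertices are `0, …, n-1`), the adjacency relation built
so far, and the current labeling (`none` for indices not yet inserted). -/
structure LcwState (L : Type) where
  n : ℕ
  adj : ℕ → ℕ → Prop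
  lab : ℕ → Option L

/-- The initial, empty state. -/
def LcwState.init (L : Type) : LcwState L :=
  ⟨0, fun _ _ => False, fun _ => none⟩

/-- Executing one operation. -/
def LcwState.step {L : Type} [DecidableEq L] (s : LcwState L) : LcwOp L → LcwState L
  | .insert a => ⟨s.n + 1, s.adj, fun v => if v = s.n then some a else s.lab v⟩
  | .join i j =>
      ⟨s.n,
       fun u v => s.adj u v ∨
         (u ≠ v ∧ ((s.lab u = some i ∧ s.lab v = some j) ∨
                   (s.lab u = some j ∧ s.lab v = some i))),
       s.lab⟩
  | .relabel i j => ⟨s.n, s.adj, fun v => if s.lab v = some i then some j else s.lab v⟩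

/-- Executing an lcw expression (a list of operations) from the empty state. -/
def runLcw {L : Type} [DecidableEq L] (e : List (LcwOp L)) : LcwState L :=
  e.foldl LcwState.step (LcwState.init L)

/-- Well-formedness: every edge-adding operation uses two distinct labels. -/
def WfExpr {L : Type} (e : List (LcwOp L)) : Prop :=
  ∀ op ∈ e, ∀ i j : L, op = LcwOp.join i j → i ≠ j

/-- The expression `e` builds the graph `G`, where the bijection
`f` sends each vertex of `G` to its insertion index (so `f` records the
insertion order of the vertices). -/
def BuildsVia {L V : Type} [DecidableEq L] [Fintype V] (e : List (LcwOp L))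
    (G : SimpleGraph V) (f : V → ℕ) : Prop :=
  WfExpr e ∧ Function.Injective f ∧ (runLcw e).n = Fintype.card V ∧
    (∀ v, f v < (runLcw e).n) ∧ ∀ u v, G.Adj u v ↔ (runLcw e).adj (f u) (f v)

/-- The expression `e` builds the graph `G`. -/
def Builds {L V : Type} [DecidableEq L] [Fintype V] (e : List (LcwOp L))
    (G : SimpleGraph V) : Prop :=
  ∃ f : V → ℕ, BuildsVia e G f

/-- The linear clique-width of a finite graph: the least size of a label
alphabet over which some lcw expression builds `G`.  (An expression over
`Fin k` is an expression using `k` labels; an *efficient* expression for `G`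
is one over `Fin (lcw G)`.) -/
noncomputable def lcw {V : Type} [Fintype V] (G : SimpleGraph V) : ℕ :=
  sInf {k : ℕ | ∃ e : List (LcwOp (Fin k)), Builds e G}

/-- `ℓ` is a sink label of the expression `e`: it is never used in an
edge-adding operation and vertices labeled `ℓ` are never relabeled. -/
def SinkLabel {L : Type} (e : List (LcwOp L)) (ℓ : L) : Prop :=
  (∀ op ∈ e, ∀ i j : L, op = LcwOp.join i j → i ≠ ℓ ∧ j ≠ ℓ) ∧
  (∀ op ∈ e, ∀ j : L, op = LcwOp.relabel ℓ j → j = ℓ)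

/-- An expression is sink-free if no label is a sink label. -/
def SinkFree {L : Type} (e : List (LcwOp L)) : Prop :=
  ∀ ℓ : L, ¬ SinkLabel e ℓ

/-- The disjoint union of two graphs. -/
def GraphDisjUnion {V W : Type} (G : SimpleGraph V) (H : SimpleGraph W) :
    SimpleGraph (V ⊕ W) where
  Adj x y :=
    match x, y with
    | Sum.inl a, Sum.inl b => G.Adj a b
    | Sum.inr a, Sum.inr b => H.Adj a b
    | _, _ => False
  symm := by
    constructor
    rintro (a | a) (b | b) h
    · exact G.adj_symm h
    · exact h.elim
    · exact h.elim
    · exact H.adj_symm h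
  loopless := by
    constructor
    rintro (a | a) h
    · exact G.irrefl h
    · exact H.irrefl h

/-- The join of two graphs: their disjoint union together with all edges
between the two sides. -/
def GraphJoin {V W : Type} (G : SimpleGraph V) (H : SimpleGraph W) :
    SimpleGraph (V ⊕ W) :=
  (GraphDisjUnion Gᶜ Hᶜ)ᶜ

/-- `H` is (isomorphic to) an induced subgraph of `G`. -/
def InducedSubgraphOf {W V : Type} (H : SimpleGraph W) (G : SimpleGraph V) : Prop :=
  ∃ f : W ↪ V, ∀ a b : W, H.Adj a b ↔ G.Adj (f a) (f b)

/-- The path `P₄` on four vertices (edges 01, 12, 23). -/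
def pathP4 : SimpleGraph (Fin 4) :=
  SimpleGraph.fromRel (fun a b => (b : ℕ) = (a : ℕ) + 1)

/-- The cycle `C₄` on four vertices (edges 01, 12, 23, 30). -/
def cycleC4 : SimpleGraph (Fin 4) :=
  SimpleGraph.fromRel (fun a b => (b : ℕ) = (a : ℕ) + 1 ∨ ((a : ℕ) = 3 ∧ (b : ℕ) = 0))

/-- The graph `2K₂` (edges 01 and 23). -/
def twoK2 : SimpleGraph (Fin 4) :=
  SimpleGraph.fromRel (fun a b => ((a : ℕ) = 0 ∧ (b : ℕ) = 1) ∨ ((a : ℕ) = 2 ∧ (b : ℕ) = 3))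

/-- Cographs: the graphs with no induced `P₄`. -/
def IsCograph {V : Type} (G : SimpleGraph V) : Prop :=
  ¬ InducedSubgraphOf pathP4 G

/-- Quasi-threshold (trivially perfect) graphs: no induced `P₄` and no induced `C₄`. -/
def IsQuasiThreshold {V : Type} (G : SimpleGraph V) : Prop :=
  ¬ InducedSubgraphOf pathP4 G ∧ ¬ InducedSubgraphOf cycleC4 G

/-- Threshold graphs: no induced `P₄`, `C₄` or `2K₂`. -/
def IsThreshold {V : Type} (G : SimpleGraph V) : Prop :=
  ¬ InducedSubgraphOf pathP4 G ∧ ¬ InducedSubgraphOf cycleC4 G ∧ ¬ InducedSubgraphOf twoK2 G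

/-- A finite graph, encoded with vertex set `Fin n`.  A *class* of graphs,
i.e. a set of finite graphs closed under isomorphism, is modelled as a
hereditary set of `FinGraph`s (hereditary sets are automatically closed
under isomorphism). -/
def FinGraph : Type := Σ n : ℕ, SimpleGraph (Fin n)

/-- The complement of a finite graph. -/
def FinGraph.compl (G : FinGraph) : FinGraph := ⟨G.1, G.2ᶜ⟩

/-- The induced-subgraph order on finite graphs. -/
def IndF (H G : FinGraph) : Prop := InducedSubgraphOf H.2 G.2

/-- A set of finite graphs is hereditary if it is closed downward under the
induced subgraph order (in particular it is closed under isomorphism). -/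
def Hereditary (C : Set FinGraph) : Prop :=
  ∀ G ∈ C, ∀ H : FinGraph, IndF H G → H ∈ C

/-- The finite graph `K` is isomorphic to the graph `G`. -/
def IsoTo {V : Type} (K : FinGraph) (G : SimpleGraph V) : Prop :=
  ∃ e : Fin K.1 ≃ V, ∀ a b, K.2.Adj a b ↔ G.Adj (e a) (e b)

/-- The class `C` contains (a copy of) the graph `G`. -/
def MemUpToIso (C : Set FinGraph) {V : Type} (G : SimpleGraph V) : Prop :=
  ∃ K ∈ C, IsoTo K G

/-- `C` is closed under disjoint unions. -/
def ClosedUnderDisjointUnions (C : Set FinGraph) : Prop :=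
  ∀ G ∈ C, ∀ H ∈ C, MemUpToIso C (GraphDisjUnion (Sigma.snd G) (Sigma.snd H))

/-- `C` is closed under joins. -/
def ClosedUnderJoins (C : Set FinGraph) : Prop :=
  ∀ G ∈ C, ∀ H ∈ C, MemUpToIso C (GraphJoin (Sigma.snd G) (Sigma.snd H))

/-- `C` is atomic: it cannot be written as the union of two proper
hereditary subclasses. -/
def AtomicClass (C : Set FinGraph) : Prop :=
  ¬ ∃ D₁ D₂ : Set FinGraph, Hereditary D₁ ∧ Hereditary D₂ ∧
      D₁ ⊂ C ∧ D₂ ⊂ C ∧ C = D₁ ∪ D₂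

/-- The inflation `G[H₁, …, Hₙ]` of a graph `G` on `Fin n` by graphs
`H i` (`i : Fin n`): substitute `H i` for the vertex `i` of `G`. -/
def inflate {n : ℕ} (G : SimpleGraph (Fin n)) (m : Fin n → ℕ)
    (H : ∀ i : Fin n, SimpleGraph (Fin (m i))) :
    SimpleGraph (Σ i : Fin n, Fin (m i)) where
  Adj x y := (x.1 ≠ y.1 ∧ G.Adj x.1 y.1) ∨ ∃ h : x.1 = y.1, (H y.1).Adj (h ▸ x.2) y.2
  symm := by
    constructor
    rintro ⟨i, a⟩ ⟨j, b⟩ (⟨hne, hadj⟩ | ⟨h, hadj⟩)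
    · exact Or.inl ⟨hne.symm, G.adj_symm hadj⟩
    · cases h
      exact Or.inr ⟨rfl, (H i).adj_symm hadj⟩
  loopless := by
    constructor
    rintro ⟨i, a⟩ (⟨hne, _⟩ | ⟨h, hadj⟩)
    · exact hne rfl
    · exact (H i).irrefl hadj

/-- The inflation `C[D]` of the class `C` by the class `D`: all graphs
isomorphic to an inflation of a graph of `C` by graphs of `D`. -/
def classInflate (C D : Set FinGraph) : Set FinGraph :=
  {K | ∃ (n : ℕ) (G : SimpleGraph (Fin n)) (m : Fin n → ℕ)
        (H : ∀ i : Fin n, SimpleGraph (Fin (m i))),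
      (⟨n, G⟩ : FinGraph) ∈ C ∧ (∀ i, (⟨m i, H i⟩ : FinGraph) ∈ D) ∧
      IsoTo K (inflate G m H)}

/-- The class of threshold graphs (as finite graphs). -/
def thresholdClass : Set FinGraph := {G : FinGraph | IsThreshold G.2}

/-- Vertex types of the sequence witnessing unbounded linear clique-width:
`qtV 0` carries `G₁ = K₂` and `qtV (k+1)` carries
`G_{k+2} = K₁ ∗ ((G_{k+1} ∪ G_{k+1}) ∪ (G_{k+1} ∪ G_{k+1}))`. -/
def qtV : ℕ → Type
  | 0 => Fin 2
  | k + 1 => Unit ⊕ ((qtV k ⊕ qtV k) ⊕ (qtV k ⊕ qtV k))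

instance qtVFintype : ∀ k : ℕ, Fintype (qtV k)
  | 0 => inferInstanceAs (Fintype (Fin 2))
  | k + 1 =>
      letI := qtVFintype k
      inferInstanceAs (Fintype (Unit ⊕ ((qtV k ⊕ qtV k) ⊕ (qtV k ⊕ qtV k))))

/-- The graphs `G₁, G₂, …` of the paper, reindexed so that `qtG k = G_{k+1}`:
`qtG 0 = K₂` and `qtG (k+1) = K₁ ∗ ((qtG k ∪ qtG k) ∪ (qtG k ∪ qtG k))`. -/
def qtG : ∀ k : ℕ, SimpleGraph (qtV k)
  | 0 => (⊤ : SimpleGraph (Fin 2))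
  | k + 1 =>
      GraphJoin (⊥ : SimpleGraph Unit)
        (GraphDisjUnion (GraphDisjUnion (qtG k) (qtG k)) (GraphDisjUnion (qtG k) (qtG k)))

/-!
Take an lcw expression for `G` over `k` labels and, for every `i`, one for `H i` over `d` labels.
In the expression for `G`, replace the insertion of vertex `i` with label `a` by the expression
for `H i` written over the labels `inr b`, followed by relabeling every `inr b` to `inl a`, and let
the edge and relabel operations of `G` act on the labels `inl`. Each copy of `H i` is completed
before the next one starts and then carries the single label `inl a`; the operations of `G`
therefore treat it like the vertex `i`, and since no `inr` label survives, the `d` labels are free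
again for the next copy. This builds `G[H₁, …, Hₙ]` over `k + d` labels. The bound for classes
follows because lcw is invariant under isomorphism.
-/
attribute [ext] LcwState

namespace LcwOp

variable {L L' : Type}

def map (g : L → L') : LcwOp L → LcwOp L'
  | .insert a => .insert (g a)
  | .join i j => .join (g i) (g j)
  | .relabel i j => .relabel (g i) (g j)

end LcwOp

lemma WfExpr.map {L L' : Type} {g : L → L'} (hg : Function.Injective g) {e : List (LcwOp L)}
    (he : WfExpr e) : WfExpr (e.map (LcwOp.map g)) := by
  intro op hop i j hij
  obtain ⟨op', hop', rfl⟩ := List.mem_map.mp hop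
  cases op' with
  | insert a => cases hij
  | relabel a b => cases hij
  | join a b =>
      obtain ⟨rfl, rfl⟩ := LcwOp.join.inj hij
      exact hg.ne (he _ hop' a b rfl)

namespace LcwState

variable {L L' : Type}

structure Valid (s : LcwState L) : Prop where
  lab_eq_none : ∀ v, s.n ≤ v → s.lab v = none
  lab_ne_none : ∀ v, v < s.n → s.lab v ≠ none
  lt_of_adj : ∀ u v, s.adj u v → u < s.n ∧ v < s.n

lemma valid_init : (init L).Valid :=
  ⟨fun _ _ => rfl, fun _ h => absurd h (Nat.not_lt_zero _), fun _ _ h => h.elim⟩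

lemma Valid.step [DecidableEq L] {s : LcwState L} (hs : s.Valid) (op : LcwOp L) :
    (s.step op).Valid := by
  cases op with
  | insert a =>
      refine ⟨fun v hv => ?_, fun v hv => ?_, fun u v h => ?_⟩
      · simp only [LcwState.step] at hv ⊢
        rw [if_neg (by omega), hs.lab_eq_none v (by omega)]
      · simp only [LcwState.step] at hv ⊢
        split_ifs with h
        · simp
        · exact hs.lab_ne_none v (by omega)
      · have := hs.lt_of_adj u v h
        simp only [LcwState.step]
        omega
  | join i j =>
      have lt_of_lab : ∀ v (x : L), s.lab v = some x → v < s.n := fun v x hv => by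
        by_contra hc
        rw [hs.lab_eq_none v (by omega)] at hv
        cases hv
      refine ⟨hs.lab_eq_none, hs.lab_ne_none, fun u v h => ?_⟩
      rcases h with h | ⟨-, ⟨hu, hv⟩ | ⟨hu, hv⟩⟩
      · exact hs.lt_of_adj u v h
      all_goals exact ⟨lt_of_lab u _ hu, lt_of_lab v _ hv⟩
  | relabel i j =>
      refine ⟨fun v hv => ?_, fun v hv => ?_, hs.lt_of_adj⟩
      · simp only [LcwState.step] at hv ⊢
        simp [hs.lab_eq_none v hv]
      · simp only [LcwState.step]
        split_ifs
        · simp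
        · exact hs.lab_ne_none v hv

lemma Valid.foldl [DecidableEq L] {s : LcwState L} (hs : s.Valid) (e : List (LcwOp L)) :
    (e.foldl LcwState.step s).Valid := by
  induction e generalizing s with
  | nil => exact hs
  | cons op e ih => exact ih (hs.step op)

lemma valid_runLcw [DecidableEq L] (e : List (LcwOp L)) : (runLcw e).Valid :=
  valid_init.foldl e

def mapLab (g : L → L') (s : LcwState L) : LcwState L' :=
  ⟨s.n, s.adj, fun v => (s.lab v).map g⟩

lemma mapLab_mapLab {L'' : Type} (g : L → L') (g' : L' → L'') (s : LcwState L) :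
    (s.mapLab g).mapLab g' = s.mapLab (g' ∘ g) := by
  ext <;> simp [mapLab]

lemma step_relabel [DecidableEq L] (s : LcwState L) (i j : L) :
    s.step (.relabel i j) = s.mapLab (fun x => if x = i then j else x) := by
  refine LcwState.ext rfl rfl (funext fun v => ?_)
  simp only [step, mapLab]
  cases s.lab v with
  | none => simp
  | some x => by_cases hx : x = i <;> simp [hx]

lemma mapLab_step [DecidableEq L] [DecidableEq L'] {g : L → L'} (hg : Function.Injective g)
    (s : LcwState L) (op : LcwOp L) :
    (s.step op).mapLab g = (s.mapLab g).step (op.map g) := by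
  have lab_iff : ∀ v x, (s.lab v).map g = some (g x) ↔ s.lab v = some x := fun v x => by
    cases s.lab v <;> simp [hg.eq_iff]
  cases op with
  | insert a =>
      refine LcwState.ext rfl rfl (funext fun v => ?_)
      show (if v = s.n then some a else s.lab v).map g = if v = s.n then some (g a) else _
      split_ifs <;> rfl
  | join i j =>
      refine LcwState.ext rfl (funext fun u => funext fun v => ?_) rfl
      simp only [step, mapLab, LcwOp.map, lab_iff]
  | relabel i j =>
      simp only [LcwOp.map, step_relabel, mapLab_mapLab]
      congr 1
      ext x
      simp [apply_ite g, hg.eq_iff]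

end LcwState

open LcwState in
lemma runLcw_map {L L' : Type} [DecidableEq L] [DecidableEq L'] {g : L → L'}
    (hg : Function.Injective g) (e : List (LcwOp L)) :
    runLcw (e.map (LcwOp.map g)) = (runLcw e).mapLab g := by
  suffices ∀ s : LcwState L,
      (e.map (LcwOp.map g)).foldl step (s.mapLab g) = (e.foldl step s).mapLab g from
    this (init L)
  induction e with
  | nil => exact fun _ => rfl
  | cons op e ih => intro s; simp only [List.map_cons, List.foldl_cons, ← mapLab_step hg, ih]

section Builds

variable {L L' V W : Type} [DecidableEq L] [Fintype V]

lemma BuildsVia.map [DecidableEq L'] {g : L → L'} (hg : Function.Injective g)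
    {e : List (LcwOp L)} {G : SimpleGraph V} {f : V → ℕ} (h : BuildsVia e G f) :
    BuildsVia (e.map (LcwOp.map g)) G f := by
  obtain ⟨hwf, hinj, hn, hlt, hadj⟩ := h
  rw [BuildsVia, runLcw_map hg]
  exact ⟨hwf.map hg, hinj, hn, hlt, hadj⟩

lemma Builds.map [DecidableEq L'] {g : L → L'} (hg : Function.Injective g)
    {e : List (LcwOp L)} {G : SimpleGraph V} (h : Builds e G) :
    Builds (e.map (LcwOp.map g)) G :=
  let ⟨f, hf⟩ := h
  ⟨f, hf.map hg⟩

lemma Builds.of_iso [Fintype W] {e : List (LcwOp L)} {G : SimpleGraph V} {G' : SimpleGraph W}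
    (φ : G ≃g G') (h : Builds e G) : Builds e G' := by
  obtain ⟨f, hwf, hinj, hn, hlt, hadj⟩ := h
  refine ⟨f ∘ φ.symm, hwf, hinj.comp φ.symm.injective, hn.trans (Fintype.card_congr φ.toEquiv),
    fun v => hlt _, fun u v => ?_⟩
  rw [← φ.symm.map_adj_iff, hadj]
  rfl

lemma runLcw_map_insert (l : List L) :
    runLcw (l.map .insert) = ⟨l.length, fun _ _ => False, fun v => l[v]?⟩ := by
  induction l using List.reverseRecOn with
  | nil => rfl
  | append_singleton l a ih =>
      rw [runLcw, List.map_append, List.foldl_append, ← runLcw, ih]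
      refine LcwState.ext (by simp [LcwState.step]) rfl (funext fun v => ?_)
      simp only [List.map_cons, List.map_nil, List.foldl_cons, List.foldl_nil, LcwState.step]
      rw [List.getElem?_append]
      split_ifs <;> simp_all; omega

lemma LcwState.foldl_map_join (ps : List (L × L)) (s : LcwState L) :
    (ps.map fun p => LcwOp.join p.1 p.2).foldl LcwState.step s =
      ⟨s.n, fun u v => s.adj u v ∨ ∃ p ∈ ps, u ≠ v ∧
        ((s.lab u = some p.1 ∧ s.lab v = some p.2) ∨ (s.lab u = some p.2 ∧ s.lab v = some p.1)),
        s.lab⟩ := by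
  induction ps generalizing s with
  | nil => exact LcwState.ext rfl (by simp) rfl
  | cons p ps ih =>
      rw [List.map_cons, List.foldl_cons, ih]
      refine LcwState.ext rfl (funext fun u => funext fun v => ?_) rfl
      simp [LcwState.step, or_assoc]

lemma exists_builds (G : SimpleGraph V) :
    ∃ e : List (LcwOp (Fin (Fintype.card V))), Builds e G := by
  classical
  set N := Fintype.card V
  set g : V ≃ Fin N := Fintype.equivFin V
  set ps := (Finset.univ.filter fun p : Fin N × Fin N => G.Adj (g.symm p.1) (g.symm p.2)).toList
  set e : List (LcwOp (Fin N)) := (List.finRange N).map .insert ++ ps.map fun p => .join p.1 p.2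
  have hrun : (runLcw e).n = N ∧ ∀ u v, (runLcw e).adj (g u) (g v) ↔
      ∃ a b, G.Adj (g.symm a) (g.symm b) ∧ u ≠ v ∧
        ((g u = a ∧ g v = b) ∨ (g u = b ∧ g v = a)) := by
    rw [runLcw, List.foldl_append, ← runLcw, runLcw_map_insert, LcwState.foldl_map_join]
    simp [ps, Fin.val_inj]
  refine ⟨e, fun v => g v, ?_, fun u v h => g.injective (Fin.val_injective h), hrun.1,
    fun v => by rw [hrun.1]; exact (g v).isLt, fun u v => ?_⟩
  · rintro op hop i j rfl rfl
    simp [e, ps] at hop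
  · rw [hrun.2]
    constructor
    · exact fun h => ⟨g u, g v, by simpa using h, G.ne_of_adj h, .inl ⟨rfl, rfl⟩⟩
    · rintro ⟨a, b, hab, -, ⟨rfl, rfl⟩ | ⟨rfl, rfl⟩⟩
      · simpa using hab
      · simpa using hab.symm

lemma lcw_le_of_builds {G : SimpleGraph V} {k : ℕ} {e : List (LcwOp (Fin k))}
    (h : Builds e G) : lcw G ≤ k :=
  Nat.sInf_le ⟨e, h⟩

lemma exists_builds_lcw (G : SimpleGraph V) : ∃ e : List (LcwOp (Fin (lcw G))), Builds e G :=
  Nat.sInf_mem (s := {k | ∃ e : List (LcwOp (Fin k)), Builds e G}) ⟨_, exists_builds G⟩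

lemma lcw_le_of_iso [Fintype W] {G : SimpleGraph V} {G' : SimpleGraph W} (φ : G ≃g G') :
    lcw G ≤ lcw G' :=
  let ⟨_, he⟩ := exists_builds_lcw G'
  lcw_le_of_builds (he.of_iso φ.symm)

end Builds

namespace LcwState

variable {α β : Type}

def append (s : LcwState (α ⊕ β)) (t : LcwState β) : LcwState (α ⊕ β) where
  n := s.n + t.n
  adj u v := s.adj u v ∨ (s.n ≤ u ∧ s.n ≤ v ∧ t.adj (u - s.n) (v - s.n))
  lab v := if v < s.n then s.lab v else (t.lab (v - s.n)).map .inr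

lemma append_init {s : LcwState (α ⊕ β)} (hs : s.Valid) : s.append (init β) = s := by
  refine LcwState.ext (Nat.add_zero _) (funext fun u => funext fun v => ?_) (funext fun v => ?_)
  · simp [append, init]
  · by_cases hv : v < s.n
    · simp [append, hv]
    · simp [append, init, hv, hs.lab_eq_none v (by omega)]

lemma append_lab_eq_inr {s : LcwState (α ⊕ β)} (hs : ∀ v b, s.lab v ≠ some (.inr b))
    (t : LcwState β) (v : ℕ) (b : β) :
    (s.append t).lab v = some (.inr b) ↔ s.n ≤ v ∧ t.lab (v - s.n) = some b := by
  by_cases hv : v < s.n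
  · simp [append, hv, hs v b]
  · simp [append, hv, Nat.le_of_not_lt hv]

lemma append_step [DecidableEq α] [DecidableEq β] {s : LcwState (α ⊕ β)}
    (hs : ∀ v b, s.lab v ≠ some (.inr b)) (t : LcwState β) (op : LcwOp β) :
    (s.append t).step (op.map .inr) = s.append (t.step op) := by
  cases op with
  | insert b =>
      refine LcwState.ext (Nat.add_assoc _ _ _) rfl (funext fun v => ?_)
      simp only [step, append, LcwOp.map]
      by_cases hv : v < s.n
      · simp [hv, show v ≠ s.n + t.n by omega]
      · have : v - s.n = t.n ↔ v = s.n + t.n := by omega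
        by_cases hvn : v = s.n + t.n <;> simp [hv, hvn, this]
  | join b b' =>
      refine LcwState.ext rfl (funext fun u => funext fun v => ?_) rfl
      simp only [step, LcwOp.map, append_lab_eq_inr hs]
      simp only [append]
      by_cases hu : s.n ≤ u <;> by_cases hv : s.n ≤ v <;>
        simp only [hu, hv, true_and, false_and, and_false, or_false]
      have : u - s.n = v - s.n ↔ u = v := by omega
      simp only [ne_eq, this, or_assoc]
  | relabel b b' =>
      refine LcwState.ext rfl rfl (funext fun v => ?_)
      simp only [step, LcwOp.map, append]
      by_cases hv : v < s.n
      · simp [hv, hs v b]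
      · simp only [hv, if_false]
        cases t.lab (v - s.n) with
        | none => simp
        | some c => by_cases hc : c = b <;> simp [hc]

lemma foldl_map_inr [DecidableEq α] [DecidableEq β] {s : LcwState (α ⊕ β)} (hs : s.Valid)
    (hs' : ∀ v b, s.lab v ≠ some (.inr b)) (e : List (LcwOp β)) :
    (e.map (LcwOp.map .inr)).foldl step s = s.append (runLcw e) := by
  suffices ∀ t, (e.map (LcwOp.map .inr)).foldl step (s.append t) = s.append (e.foldl step t) by
    have h := this (init β)
    rwa [append_init hs] at h
  induction e with
  | nil => exact fun _ => rfl
  | cons op e ih => intro t; rw [List.map_cons, List.foldl_cons, append_step hs', ih]; rfl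

lemma foldl_relabel_inr [DecidableEq α] [DecidableEq β] (a : α) (bs : List β)
    (s : LcwState (α ⊕ β)) :
    (bs.map fun b => .relabel (.inr b) (.inl a)).foldl step s =
      s.mapLab (Sum.elim .inl fun b => if b ∈ bs then .inl a else .inr b) := by
  induction bs generalizing s with
  | nil => exact LcwState.ext rfl rfl (funext fun v => by simp [mapLab])
  | cons b bs ih =>
      rw [List.map_cons, List.foldl_cons, ih, step_relabel, mapLab_mapLab]
      congr 1
      funext x
      rcases x with x | c
      · simp
      · by_cases hc : c = b <;> simp [hc]

end LcwState

section Blocks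

variable {β : Type} [DecidableEq β] (E : ℕ → List (LcwOp β))

def blockSize (t : ℕ) : ℕ := (runLcw (E t)).n

def blockStart (T : ℕ) : ℕ := ∑ t ∈ Finset.range T, blockSize E t

lemma blockStart_succ (T : ℕ) : blockStart E (T + 1) = blockStart E T + blockSize E T :=
  Finset.sum_range_succ _ _

lemma blockStart_mono : Monotone (blockStart E) := fun _ _ h =>
  Finset.sum_le_sum_of_subset (Finset.range_subset_range.mpr h)

variable {E}

lemma blockStart_add_lt {t T w : ℕ} (ht : t < T) (hw : w < blockSize E t) :
    blockStart E t + w < blockStart E T :=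
  calc blockStart E t + w < blockStart E (t + 1) := by rw [blockStart_succ]; omega
    _ ≤ blockStart E T := blockStart_mono E ht

lemma blockStart_add_inj {t t' w w' : ℕ} (hw : w < blockSize E t) (hw' : w' < blockSize E t')
    (h : blockStart E t + w = blockStart E t' + w') : t = t' ∧ w = w' := by
  rcases lt_trichotomy t t' with htt' | rfl | htt'
  · have := blockStart_add_lt htt' hw
    omega
  · omega
  · have := blockStart_add_lt htt' hw'
    omega

end Blocks

section InflateExpr

variable {α : Type} {d : ℕ}

def inflateExpr (E : ℕ → List (LcwOp (Fin d))) : List (LcwOp α) → ℕ → List (LcwOp (α ⊕ Fin d))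
  | [], _ => []
  | .insert a :: e, t =>
      (E t).map (LcwOp.map .inr) ++ (List.finRange d).map (fun b => .relabel (.inr b) (.inl a)) ++
        inflateExpr E e (t + 1)
  | .join i j :: e, t => .join (.inl i) (.inl j) :: inflateExpr E e t
  | .relabel i j :: e, t => .relabel (.inl i) (.inl j) :: inflateExpr E e t

lemma WfExpr.inflateExpr {E : ℕ → List (LcwOp (Fin d))} (hE : ∀ t, WfExpr (E t))
    {eG : List (LcwOp α)} (heG : WfExpr eG) (t : ℕ) : WfExpr (inflateExpr E eG t) := by
  induction eG generalizing t with
  | nil => exact fun _ h => absurd h List.not_mem_nil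
  | cons op e ih =>
      have he : WfExpr e := fun op hop => heG op (List.mem_cons_of_mem _ hop)
      cases op with
      | insert a =>
          intro op hop
          rcases List.mem_append.mp hop with hop | hop
          · rcases List.mem_append.mp hop with hop | hop
            · exact (hE t).map Sum.inr_injective op hop
            · obtain ⟨b, -, rfl⟩ := List.mem_map.mp hop
              intro i j h
              cases h
          · exact ih he _ op hop
      | join i j =>
          refine List.forall_mem_cons.mpr ⟨?_, ih he t⟩
          rintro _ _ h
          obtain ⟨rfl, rfl⟩ := LcwOp.join.inj h
          exact Sum.inl_injective.ne (heG _ List.mem_cons_self i j rfl)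
      | relabel i j =>
          exact List.forall_mem_cons.mpr ⟨(fun _ _ h => nomatch h), ih he t⟩

end InflateExpr

section InflateInv

open LcwState

variable {α β : Type} [DecidableEq β]

/-- Block `t`, the graph built by `E t` substituted for the `t`-th vertex inserted by the
expression of `G`, occupies the indices `blockStart E t + w` with `w < blockSize E t`. -/
structure InflateInv (E : ℕ → List (LcwOp β)) (sG : LcwState α) (s : LcwState (α ⊕ β)) :
    Prop where
  n_eq : s.n = blockStart E sG.n
  lab_ne_inr : ∀ v b, s.lab v ≠ some (.inr b)
  lab_eq : ∀ t < sG.n, ∀ w < blockSize E t, s.lab (blockStart E t + w) = (sG.lab t).map .inl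
  adj_iff : ∀ t < sG.n, ∀ t' < sG.n, ∀ w < blockSize E t, ∀ w' < blockSize E t',
    (s.adj (blockStart E t + w) (blockStart E t' + w') ↔
      (t ≠ t' ∧ sG.adj t t') ∨ (t = t' ∧ (runLcw (E t)).adj w w'))

lemma inflateInv_init (E : ℕ → List (LcwOp β)) : InflateInv E (init α) (init (α ⊕ β)) :=
  ⟨by simp [init, blockStart], (fun _ _ h => nomatch h), fun _ h => absurd h (Nat.not_lt_zero _),
    fun _ h => absurd h (Nat.not_lt_zero _)⟩

variable [DecidableEq α] {E : ℕ → List (LcwOp β)} {sG : LcwState α} {s : LcwState (α ⊕ β)}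

lemma InflateInv.join {i j : α} (hij : i ≠ j) (h : InflateInv E sG s) :
    InflateInv E (sG.step (.join i j)) (s.step (.join (.inl i) (.inl j))) := by
  refine ⟨h.n_eq, h.lab_ne_inr, h.lab_eq, fun t ht t' ht' w hw w' hw' => ?_⟩
  have hlab : ∀ t < sG.n, ∀ w < blockSize E t, ∀ x,
      s.lab (blockStart E t + w) = some (.inl x) ↔ sG.lab t = some x := fun t ht w hw x => by
    rw [h.lab_eq t ht w hw]
    cases sG.lab t <;> simp
  have hne : blockStart E t + w ≠ blockStart E t' + w' ↔ ¬(t = t' ∧ w = w') :=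
    not_congr ⟨blockStart_add_inj hw hw', by rintro ⟨rfl, rfl⟩; rfl⟩
  show (s.adj _ _ ∨ (_ ≠ _ ∧ _)) ↔ (t ≠ t' ∧ (sG.adj t t' ∨ (t ≠ t' ∧ _))) ∨ _
  rw [h.adj_iff t ht t' ht' w hw w' hw', hne, hlab t ht w hw, hlab t ht w hw,
    hlab t' ht' w' hw', hlab t' ht' w' hw']
  -- a block carries a single label, so an edge operation, whose two labels differ, adds no edge
  -- inside it
  by_cases htt : t = t'
  · subst htt
    have : ¬(sG.lab t = some i ∧ sG.lab t = some j) := fun ⟨hi, hj⟩ =>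
      hij (Option.some_injective _ (hi.symm.trans hj))
    have : ¬(sG.lab t = some j ∧ sG.lab t = some i) := fun ⟨hj, hi⟩ =>
      hij (Option.some_injective _ (hi.symm.trans hj))
    simp_all
  · simp [htt]

lemma InflateInv.relabel (i j : α) (h : InflateInv E sG s) :
    InflateInv E (sG.step (.relabel i j)) (s.step (.relabel (.inl i) (.inl j))) := by
  rw [step_relabel, step_relabel]
  refine ⟨h.n_eq, fun v b => ?_, fun t ht w hw => ?_, h.adj_iff⟩
  · simp only [mapLab]
    cases hv : s.lab v with
    | none => simp
    | some x =>
        rcases x with x | c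
        · by_cases hx : x = i <;> simp [hx]
        · exact absurd hv (h.lab_ne_inr v c)
  · simp only [mapLab]
    rw [h.lab_eq t ht w hw, Option.map_map, Option.map_map]
    congr 1
    funext x
    by_cases hx : x = i <;> simp [hx]

lemma InflateInv.insert (hsG : sG.Valid) (hs : s.Valid) (a : α) (h : InflateInv E sG s) :
    InflateInv E (sG.step (.insert a))
      ((s.append (runLcw (E sG.n))).mapLab (Sum.elim .inl fun _ => .inl a)) := by
  have hN : s.n = blockStart E sG.n := h.n_eq
  have old_lt : ∀ t < sG.n, ∀ w < blockSize E t, blockStart E t + w < s.n :=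
    fun t ht w hw => hN ▸ blockStart_add_lt ht hw
  have not_adj_new : ∀ u w, ¬s.adj u (s.n + w) ∧ ¬s.adj (s.n + w) u := fun u w =>
    ⟨fun h => by have := (hs.lt_of_adj _ _ h).2; omega,
     fun h => by have := (hs.lt_of_adj _ _ h).1; omega⟩
  refine ⟨?_, fun v b => ?_, fun t ht w hw => ?_, fun t ht t' ht' w hw w' hw' => ?_⟩
  · show s.n + _ = blockStart E (sG.n + 1)
    rw [blockStart_succ, hN]
    rfl
  · simp only [mapLab]
    cases (s.append (runLcw (E sG.n))).lab v with
    | none => simp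
    | some x => cases x <;> simp
  · show ((s.append _).lab _).map _ = (if t = sG.n then some a else sG.lab t).map Sum.inl
    rcases Nat.lt_succ_iff_lt_or_eq.mp ht with ht | rfl
    · simp only [append, old_lt t ht w hw, if_true, h.lab_eq t ht w hw, Option.map_map,
        ht.ne, if_false]
      rfl
    · obtain ⟨b, hb⟩ := Option.ne_none_iff_exists'.mp ((valid_runLcw _).lab_ne_none w hw)
      simp [append, hN, hb]
  · show (s.adj _ _ ∨ (s.n ≤ _ ∧ s.n ≤ _ ∧ _)) ↔ (t ≠ t' ∧ sG.adj t t') ∨ (t = t' ∧ _)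
    have not_adj_N : ∀ t, ¬sG.adj t sG.n ∧ ¬sG.adj sG.n t := fun t =>
      ⟨fun h => (hsG.lt_of_adj _ _ h).2.false, fun h => (hsG.lt_of_adj _ _ h).1.false⟩
    rcases Nat.lt_succ_iff_lt_or_eq.mp ht with ht | rfl <;>
      rcases Nat.lt_succ_iff_lt_or_eq.mp ht' with ht' | rfl
    · simp [h.adj_iff t ht t' ht' w hw w' hw', (old_lt t ht w hw).not_ge]
    · simp [← hN, (not_adj_new _ _).1, (not_adj_N t).1, (old_lt t ht w hw).not_ge, ht.ne]
    · simp [← hN, (not_adj_new _ _).2, (not_adj_N t').2, (old_lt t' ht' w' hw').not_ge, ht'.ne']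
    · simp [← hN, (not_adj_new _ _).1]

variable {d : ℕ}

lemma InflateInv.foldl {E : ℕ → List (LcwOp (Fin d))} {eG : List (LcwOp α)} (heG : WfExpr eG)
    {sG : LcwState α} {s : LcwState (α ⊕ Fin d)} (hsG : sG.Valid) (hs : s.Valid)
    (h : InflateInv E sG s) :
    InflateInv E (eG.foldl step sG) ((inflateExpr E eG sG.n).foldl step s) := by
  induction eG generalizing sG s with
  | nil => exact h
  | cons op e ih =>
      have he : WfExpr e := fun op hop => heG op (List.mem_cons_of_mem _ hop)
      cases op with
      | insert a =>
          rw [inflateExpr, List.foldl_append]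
          refine ih he (hsG.step _) (hs.foldl _) ?_
          rw [List.foldl_append, foldl_map_inr hs h.lab_ne_inr, foldl_relabel_inr]
          simpa using h.insert hsG hs a
      | join i j =>
          exact ih he (hsG.step _) (hs.step _) (h.join (heG _ List.mem_cons_self i j rfl))
      | relabel i j => exact ih he (hsG.step _) (hs.step _) (h.relabel i j)

end InflateInv

lemma sum_range_eq_sum_comp_of_injective {M : Type} [AddCommMonoid M] {n : ℕ} {f : Fin n → ℕ}
    (hf : Function.Injective f) (hlt : ∀ i, f i < n) (g : ℕ → M) :
    ∑ t ∈ Finset.range n, g t = ∑ i, g (f i) := by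
  let σ : Fin n ≃ Fin n := .ofBijective (fun i => ⟨f i, hlt i⟩)
    (Finite.injective_iff_bijective.mp fun i j h => hf (Fin.val_eq_of_eq h))
  rw [Finset.sum_range, ← σ.sum_comp]
  rfl

theorem BuildsVia.inflate {n : ℕ} {G : SimpleGraph (Fin n)} {m : Fin n → ℕ}
    {H : ∀ i, SimpleGraph (Fin (m i))} {k d : ℕ} {eG : List (LcwOp (Fin k))} {fG : Fin n → ℕ}
    (hG : BuildsVia eG G fG) {E : ℕ → List (LcwOp (Fin d))} (hE : ∀ t, WfExpr (E t))
    {fH : ∀ i, Fin (m i) → ℕ} (hH : ∀ i, BuildsVia (E (fG i)) (H i) (fH i)) :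
    BuildsVia (inflateExpr E eG 0) (inflate G m H) fun x => blockStart E (fG x.1) + fH x.1 x.2 := by
  obtain ⟨hwf, hinj, hn, hlt, hadj⟩ := hG
  rw [Fintype.card_fin] at hn
  have hw : ∀ x : Σ i, Fin (m i), fH x.1 x.2 < blockSize E (fG x.1) := fun x =>
    (hH x.1).2.2.2.1 x.2
  have hinv : InflateInv E (runLcw eG) (runLcw (inflateExpr E eG 0)) :=
    (inflateInv_init E).foldl hwf LcwState.valid_init LcwState.valid_init
  have hN : (runLcw (inflateExpr E eG 0)).n = blockStart E n := hn ▸ hinv.n_eq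
  refine ⟨hwf.inflateExpr hE 0, fun x y hxy => ?_, ?_, fun x => ?_, fun x y => ?_⟩
  · obtain ⟨h1, h2⟩ := blockStart_add_inj (hw x) (hw y) hxy
    obtain ⟨i, a⟩ := x
    obtain ⟨j, b⟩ := y
    obtain rfl : i = j := hinj h1
    rw [(hH i).2.1 (a₁ := a) (a₂ := b) h2]
  · rw [hN, Fintype.card_sigma, blockStart, sum_range_eq_sum_comp_of_injective hinj (hn ▸ hlt)]
    exact Finset.sum_congr rfl fun i _ => (hH i).2.2.1
  · rw [hN]
    exact blockStart_add_lt (hn ▸ hlt x.1) (hw x)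
  · obtain ⟨i, a⟩ := x
    obtain ⟨j, b⟩ := y
    rw [hinv.adj_iff _ (hlt i) _ (hlt j) _ (hw ⟨i, a⟩) _ (hw ⟨j, b⟩)]
    by_cases hij : i = j
    · subst hij
      simp [_root_.inflate, (hH i).2.2.2.2]
    · simp [_root_.inflate, hij, hinj.ne hij, hadj]

theorem builds_inflate {n : ℕ} {G : SimpleGraph (Fin n)} {m : Fin n → ℕ}
    {H : ∀ i, SimpleGraph (Fin (m i))} {k d : ℕ} {eG : List (LcwOp (Fin k))}
    {eH : Fin n → List (LcwOp (Fin d))} (hG : Builds eG G) (hH : ∀ i, Builds (eH i) (H i)) :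
    ∃ e : List (LcwOp (Fin k ⊕ Fin d)), Builds e (inflate G m H) := by
  obtain ⟨fG, hG⟩ := hG
  choose fH hfH using hH
  let E : ℕ → List (LcwOp (Fin d)) := fun t => (Function.partialInv fG t).elim [] eH
  have hE : ∀ i, E (fG i) = eH i := fun i => by simp [E, Function.partialInv_left hG.2.1]
  refine ⟨_, _, hG.inflate (fun t => ?_) fun i => hE i ▸ hfH i⟩
  show WfExpr ((Function.partialInv fG t).elim [] eH)
  cases Function.partialInv fG t with
  | none => exact fun _ h => absurd h List.not_mem_nil
  | some i => exact (hfH i).1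

theorem lcw_inflate_le {n : ℕ} (G : SimpleGraph (Fin n)) (m : Fin n → ℕ)
    (H : ∀ i, SimpleGraph (Fin (m i))) :
    lcw (inflate G m H) ≤ lcw G + Finset.univ.sup fun i => lcw (H i) := by
  set d := Finset.univ.sup fun i => lcw (H i)
  obtain ⟨eG, hG⟩ := exists_builds_lcw G
  have hH : ∀ i, ∃ e : List (LcwOp (Fin d)), Builds e (H i) := fun i =>
    let ⟨e, he⟩ := exists_builds_lcw (H i)
    ⟨_, he.map (Fin.castLE_injective (Finset.le_sup (f := fun i => lcw (H i)) (Finset.mem_univ i)))⟩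
  choose eH heH using hH
  obtain ⟨e, he⟩ := builds_inflate hG heH
  exact lcw_le_of_builds (he.map finSumFinEquiv.injective)

/-- Proposition `prop-inflate-lcw`: the inflation
`G[H₁,…,Hₙ]` satisfies `lcw (G[H₁,…,Hₙ]) ≤ lcw G + max_i lcw (H i)`; and
consequently, for classes `C`, `D` of bounded linear clique-width,
`lcw (C[D]) ≤ lcw C + lcw D`. -/
theorem statement_11 :
    (∀ (n : ℕ) (G : SimpleGraph (Fin n)) (m : Fin n → ℕ)
        (H : ∀ i : Fin n, SimpleGraph (Fin (m i))),
      lcw (inflate G m H) ≤ lcw G + Finset.univ.sup (fun i => lcw (H i))) ∧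
    (∀ (C D : Set FinGraph) (c d : ℕ),
      (∀ G ∈ C, lcw (Sigma.snd G) ≤ c) → (∀ H ∈ D, lcw (Sigma.snd H) ≤ d) →
      ∀ K ∈ classInflate C D, lcw (Sigma.snd K) ≤ c + d) := by
  refine ⟨fun n G m H => lcw_inflate_le G m H, ?_⟩
  rintro C D c d hC hD K ⟨n, G, m, H, hG, hH, φ, hφ⟩
  calc lcw K.2 ≤ lcw (inflate G m H) := lcw_le_of_iso ⟨φ, fun {a b} => (hφ a b).symm⟩
    _ ≤ lcw G + Finset.univ.sup fun i => lcw (H i) := lcw_inflate_le G m H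
    _ ≤ c + d := add_le_add (hC _ hG) (Finset.sup_le fun i _ => hD _ (hH i))
end

section
/- Every class of finite graphs that is well-quasi-ordered under the induced subgraph order is a finite union of atomic classes. -/
/-! Hereditary subclasses of a well-quasi-ordered class satisfy the descending chain condition:
from a chain `C₀ ⊋ C₁ ⊋ ⋯` pick `Gₙ ∈ Cₙ \ Cₙ₊₁`; for `i < j` we have `Gⱼ ∈ Cᵢ₊₁`, so `Gᵢ ≤ Gⱼ`
would put `Gᵢ` in the hereditary class `Cᵢ₊₁`. Hence `(Gₙ)` is a bad sequence. By well-founded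
induction every hereditary subclass is then either atomic or the union of two proper hereditary
subclasses, each of which is a finite union of atomic classes. -/

theorem Set.PartiallyWellOrderedOn.wellFoundedOn_ssubset_of_downClosed {α : Type*}
    {r : α → α → Prop} {s : Set α} (hs : s.PartiallyWellOrderedOn r) :
    {D : Set α | D ⊆ s ∧ ∀ x ∈ D, ∀ y, r y x → y ∈ D}.WellFoundedOn (· ⊂ ·) := by
  rw [Set.wellFoundedOn_iff_no_descending_seq]
  intro f hf
  have hdesc : ∀ n, f (n + 1) ⊂ f n := fun n => f.map_rel_iff.2 n.lt_succ_self
  choose x hx hx' using fun n => Set.exists_of_ssubset (hdesc n)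
  obtain ⟨i, j, hij, hr⟩ := hs.exists_lt fun n => (hf n).1 (hx n)
  have hji : f j ⊆ f (i + 1) := antitone_nat_of_succ_le (fun n => (hdesc n).subset) hij
  exact hx' i ((hf (i + 1)).2 _ (hji (hx j)) _ hr)

theorem Set.iUnion_fin_append {α : Type*} {m n : ℕ} (u : Fin m → Set α) (v : Fin n → Set α) :
    ⋃ i, Fin.append u v i = (⋃ i, u i) ∪ ⋃ i, v i :=
  finSumFinEquiv.iSup_comp.symm.trans (Set.iUnion_sum.trans (by simp))

def IsFiniteUnionOfAtomic (C : Set FinGraph) : Prop :=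
  ∃ (k : ℕ) (D : Fin k → Set FinGraph), (∀ i, Hereditary (D i) ∧ AtomicClass (D i)) ∧
    C = ⋃ i, D i

theorem AtomicClass.isFiniteUnionOfAtomic {C : Set FinGraph} (hher : Hereditary C)
    (hC : AtomicClass C) : IsFiniteUnionOfAtomic C :=
  ⟨1, fun _ => C, fun _ => ⟨hher, hC⟩, (Set.iUnion_const C).symm⟩

theorem IsFiniteUnionOfAtomic.union {C₁ C₂ : Set FinGraph} :
    IsFiniteUnionOfAtomic C₁ → IsFiniteUnionOfAtomic C₂ → IsFiniteUnionOfAtomic (C₁ ∪ C₂) := by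
  rintro ⟨k₁, D₁, hD₁, rfl⟩ ⟨k₂, D₂, hD₂, rfl⟩
  refine ⟨k₁ + k₂, Fin.append D₁ D₂, Fin.addCases ?_ ?_, (Set.iUnion_fin_append D₁ D₂).symm⟩
  · simpa only [Fin.append_left] using hD₁
  · simpa only [Fin.append_right] using hD₂

theorem isFiniteUnionOfAtomic_of_wellFoundedOn {C : Set FinGraph}
    (hwf : {D | D ⊆ C ∧ Hereditary D}.WellFoundedOn (· ⊂ ·)) (hher : Hereditary C) :
    IsFiniteUnionOfAtomic C := by
  refine hwf.induction (P := IsFiniteUnionOfAtomic) ⟨subset_rfl, hher⟩ ?_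
  rintro D ⟨hDC, hD⟩ ih
  by_cases hA : AtomicClass D
  · exact hA.isFiniteUnionOfAtomic hD
  · obtain ⟨D₁, D₂, h₁, h₂, hD₁, hD₂, rfl⟩ := not_not.1 hA
    exact (ih D₁ ⟨hD₁.subset.trans hDC, h₁⟩ hD₁).union (ih D₂ ⟨hD₂.subset.trans hDC, h₂⟩ hD₂)

/-- every class of finite graphs that is wqo under the
induced subgraph order is a finite union of atomic classes. -/
theorem statement_14 (C : Set FinGraph) (hher : Hereditary C)
    (hwqo : ∀ f : ℕ → FinGraph, (∀ i, f i ∈ C) → ∃ i j : ℕ, i < j ∧ IndF (f i) (f j)) :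
    ∃ (k : ℕ) (D : Fin k → Set FinGraph),
      (∀ i, Hereditary (D i) ∧ AtomicClass (D i)) ∧ C = ⋃ i, D i :=
  isFiniteUnionOfAtomic_of_wellFoundedOn
    (Set.partiallyWellOrderedOn_iff_exists_lt.2 hwqo).wellFoundedOn_ssubset_of_downClosed hher
end
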